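/- arXiv:1009.4321 — 6 statements merged into one kernel-verified Lean document; each statement's English description precedes it below -/
import Mathlib

section
/- The set of primitive pairs (u,v) is finite; that is, the Graver basis of A is finite. -/
/-- A pair `(u,v)` with `u, v ∈ ℕ^n`, `u ≠ v` and `A u = A v` is primitive (the binomial
`x^u − x^v` is a Graver binomial) if there is no pair `(u',v') ≠ (u,v)` with `u' ≤ u` and
`v' ≤ v` componentwise, `u' ≠ v'`, and `A u' = A v'`. -/
def IsPrimitivePair (n d : ℕ) (a : Fin n → Fin d → ℤ) (u v : Fin n → ℕ) : Prop :=
  u ≠ v ∧ (∑ i, (u i : ℤ) • a i) = (∑ i, (v i : ℤ) • a i) ∧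
    ¬ ∃ u' v' : Fin n → ℕ, (u', v') ≠ (u, v) ∧ u' ≤ u ∧ v' ≤ v ∧ u' ≠ v' ∧
      (∑ i, (u' i : ℤ) • a i) = (∑ i, (v' i : ℤ) • a i)

/-!
Primitive pairs form an antichain of `ℕⁿ × ℕⁿ` under the componentwise order: a primitive pair
lying below another one would witness that the latter is not primitive. By Dickson's lemma
`ℕⁿ × ℕⁿ` is well quasi-ordered, so every antichain in it is finite.
-/

instance Pi.wellQuasiOrderedLE_of_finite {σ α : Type*} [Finite σ] [Zero α] [Preorder α]
    [WellQuasiOrderedLE α] : WellQuasiOrderedLE (σ → α) :=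
  (Finsupp.orderIsoFunOnFinite (ι := σ) (M := α)).wellQuasiOrderedLE_iff.mp inferInstance

theorem isAntichain_setOf_isPrimitivePair (n d : ℕ) (a : Fin n → Fin d → ℤ) :
    IsAntichain (· ≤ ·) {p : (Fin n → ℕ) × (Fin n → ℕ) | IsPrimitivePair n d a p.1 p.2} := by
  rintro p ⟨hp_ne, hp_eq, -⟩ q ⟨-, -, hq_min⟩ hpq hle
  exact hq_min ⟨p.1, p.2, hpq, hle.1, hle.2, hp_ne, hp_eq⟩

/-- The set of primitive pairs is finite; that is, the Graver basis of `A` is finite. -/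
theorem graverBasis_finite (n d : ℕ) (a : Fin n → Fin d → ℤ) :
    {p : (Fin n → ℕ) × (Fin n → ℕ) | IsPrimitivePair n d a p.1 p.2}.Finite :=
  WellQuasiOrderedLE.finite_of_isAntichain (isAntichain_setOf_isPrimitivePair n d a)
end

section
/- Let M be a monomial A-graded ideal, let x^u be a minimal generator of M (i.e. x^u ∈ M and x^{u−e_i} ∉ M for every i with u_i > 0), and let x^v be the standard monomial of degree A u. Then u ≠ v and the pair (u,v) is primitive, i.e. the binomial x^u − x^v is a Graver binomial. -/
/-!
A monomial `A`-graded ideal `M` has exactly one standard monomial in each degree of `ℕA`: if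
`x^w ≠ x^w'` were both standard of the same degree, one-dimensionality of that degree of `S/M`
would put `x^w' - c x^w` in `M`, and a monomial ideal contains every monomial occurring in its
elements. Now let `u' ≤ u`, `v' ≤ v`, `u' ≠ v'`, `A u' = A v'`. As `x^v'` divides the standard
`x^v`, it is standard, so `x^u'` is not, i.e. `x^u' ∈ M`; minimality of `x^u` forces `u' = u`,
and then `x^v'` is standard of degree `A u`, so `v' = v`.
-/

open MvPolynomial

open Classical in
/-- An ideal `I ⊆ k[x_1,…,x_n]` is `A`-graded if it is generated by weighted homogeneous
elements (with respect to the weights `x_i ↦ a_i`) and for every `deg ∈ ℤ^d` the `k`-dimension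
of the degree-`deg` component of `S/I` equals `1` if `deg ∈ ℕA` and `0` otherwise. -/
def IsAGraded (k : Type*) [Field k] (n d : ℕ) (a : Fin n → Fin d → ℤ)
    (I : Ideal (MvPolynomial (Fin n) k)) : Prop :=
  (∃ G : Set (MvPolynomial (Fin n) k),
      (∀ f ∈ G, ∃ m : Fin d → ℤ, IsWeightedHomogeneous a f m) ∧ I = Ideal.span G) ∧
  ∀ deg : Fin d → ℤ,
    Module.finrank k
      ↥((Submodule.span k {f : MvPolynomial (Fin n) k |
          ∃ u : Fin n → ℕ, (∑ i, (u i : ℤ) • a i) = deg ∧ f = ∏ i, X i ^ u i}).map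
        (Ideal.Quotient.mkₐ k I).toLinearMap) =
      if deg ∈ AddSubmonoid.closure (Set.range a) then 1 else 0

namespace MvPolynomial

variable {σ k : Type*} [Fintype σ] [CommSemiring k]

theorem prod_X_pow_eq_monomial_equivFunOnFinite (w : σ → ℕ) :
    ∏ i, (X i : MvPolynomial σ k) ^ w i = monomial (Finsupp.equivFunOnFinite.symm w) 1 := by
  rw [← prod_X_pow_eq_monomial]
  exact (Finset.prod_subset (Finset.subset_univ _) fun i _ hi => by simp_all).symm

theorem prod_X_pow_mem_of_le {M : Ideal (MvPolynomial σ k)} {w w' : σ → ℕ} (h : w ≤ w')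
    (hw : ∏ i, (X i : MvPolynomial σ k) ^ w i ∈ M) :
    ∏ i, (X i : MvPolynomial σ k) ^ w' i ∈ M :=
  Ideal.mem_of_dvd _ (Finset.prod_dvd_prod_of_dvd _ _ fun i _ => pow_dvd_pow _ (h i)) hw

theorem prod_X_pow_mem_span_of_coeff_ne_zero {G : Set (σ → ℕ)} {f : MvPolynomial σ k}
    (hf : f ∈ Ideal.span ((fun u : σ → ℕ => ∏ i, (X i : MvPolynomial σ k) ^ u i) '' G))
    {w : σ → ℕ} (hw : coeff (Finsupp.equivFunOnFinite.symm w) f ≠ 0) :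
    ∏ i, (X i : MvPolynomial σ k) ^ w i ∈
      Ideal.span ((fun u : σ → ℕ => ∏ i, (X i : MvPolynomial σ k) ^ u i) '' G) := by
  have himage : (fun u : σ → ℕ => ∏ i, (X i : MvPolynomial σ k) ^ u i) '' G =
      (fun s => monomial s 1) '' (Finsupp.equivFunOnFinite.symm '' G) := by
    rw [Set.image_image]
    exact Set.image_congr fun w _ => prod_X_pow_eq_monomial_equivFunOnFinite w
  rw [himage, mem_ideal_span_monomial_image] at hf
  rw [himage, prod_X_pow_eq_monomial_equivFunOnFinite, mem_ideal_span_monomial_image]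
  intro m hm
  rw [Finset.mem_singleton.mp (support_monomial_subset hm)]
  exact hf _ (mem_support_iff.mpr hw)

end MvPolynomial

theorem sum_natCast_smul_mem_closure_range {ι G : Type*} [Fintype ι] [AddCommGroup G]
    (a : ι → G) (w : ι → ℕ) :
    ∑ i, (w i : ℤ) • a i ∈ AddSubmonoid.closure (Set.range a) :=
  sum_mem fun i _ => by
    rw [natCast_zsmul]
    exact AddSubmonoid.nsmul_mem _ (AddSubmonoid.subset_closure (Set.mem_range_self i)) _

theorem Pi.exists_le_sub_single_of_lt {ι : Type*} [DecidableEq ι] {u' u : ι → ℕ} (h : u' < u) :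
    ∃ i, 0 < u i ∧ u' ≤ u - Pi.single i 1 := by
  obtain ⟨hle, i, hi⟩ := Pi.lt_def.mp h
  refine ⟨i, by omega, fun l => ?_⟩
  by_cases hl : l = i
  · subst hl
    simp only [Pi.sub_apply, Pi.single_eq_same]
    omega
  · simpa [Pi.single_eq_of_ne hl] using hle l

theorem IsAGraded.eq_of_prod_X_pow_notMem {k : Type*} [Field k] {n d : ℕ}
    {a : Fin n → Fin d → ℤ} {M : Ideal (MvPolynomial (Fin n) k)}
    (hmono : ∃ G : Set (Fin n → ℕ),
      M = Ideal.span ((fun u : Fin n → ℕ => ∏ i, (X i : MvPolynomial (Fin n) k) ^ u i) '' G))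
    (hAgraded : IsAGraded k n d a M) {w w' : Fin n → ℕ}
    (hdeg : ∑ i, (w i : ℤ) • a i = ∑ i, (w' i : ℤ) • a i)
    (hw : ∏ i, (X i : MvPolynomial (Fin n) k) ^ w i ∉ M)
    (hw' : ∏ i, (X i : MvPolynomial (Fin n) k) ^ w' i ∉ M) : w = w' := by
  by_contra hne
  set q := (Ideal.Quotient.mkₐ k M).toLinearMap
  set N := (Submodule.span k {f : MvPolynomial (Fin n) k |
      ∃ u : Fin n → ℕ, ∑ i, (u i : ℤ) • a i = ∑ i, (w i : ℤ) • a i ∧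
        f = ∏ i, X i ^ u i}).map q
  have hrank : Module.finrank k N = 1 := by
    have := hAgraded.2 (∑ i, (w i : ℤ) • a i)
    rwa [if_pos (sum_natCast_smul_mem_closure_range a w)] at this
  let x : N := ⟨q (∏ i, X i ^ w i), Submodule.mem_map_of_mem (Submodule.subset_span ⟨w, rfl, rfl⟩)⟩
  let y : N :=
    ⟨q (∏ i, X i ^ w' i), Submodule.mem_map_of_mem (Submodule.subset_span ⟨w', hdeg.symm, rfl⟩)⟩
  have hx : x ≠ 0 := fun h => hw (Ideal.Quotient.eq_zero_iff_mem.mp (congrArg Subtype.val h))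
  obtain ⟨c, hc⟩ := (finrank_eq_one_iff_of_nonzero' x hx).mp hrank y
  have hmem : ∏ i, X i ^ w' i - c • ∏ i, X i ^ w i ∈ M := by
    refine Ideal.Quotient.eq.mp (?_ : q _ = q _)
    rw [map_smul]
    exact (congrArg Subtype.val hc).symm
  obtain ⟨G, rfl⟩ := hmono
  refine hw' (prod_X_pow_mem_span_of_coeff_ne_zero hmem ?_)
  rw [prod_X_pow_eq_monomial_equivFunOnFinite, prod_X_pow_eq_monomial_equivFunOnFinite,
    coeff_sub, coeff_smul, coeff_monomial, coeff_monomial]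
  simp [Finsupp.equivFunOnFinite.symm.injective.ne hne]

/-- Let `M` be a monomial `A`-graded ideal, `x^u` a minimal generator of `M`
(i.e. `x^u ∈ M` and `x^{u−e_i} ∉ M` for every `i` with `u_i > 0`), and `x^v` the standard
monomial of degree `A u` (i.e. `A v = A u` and `x^v ∉ M`). Then `u ≠ v` and `(u,v)` is
primitive, i.e. `x^u − x^v` is a Graver binomial. -/
theorem minimal_generator_with_standard_is_primitive (k : Type*) [Field k] (n d : ℕ)
    (a : Fin n → Fin d → ℤ) (M : Ideal (MvPolynomial (Fin n) k))
    (hmono : ∃ G : Set (Fin n → ℕ),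
      M = Ideal.span ((fun u : Fin n → ℕ => ∏ i, (X i : MvPolynomial (Fin n) k) ^ u i) '' G))
    (hAgraded : IsAGraded k n d a M)
    (u v : Fin n → ℕ)
    (hu : (∏ i, (X i : MvPolynomial (Fin n) k) ^ u i) ∈ M)
    (humin : ∀ i : Fin n, 0 < u i →
      (∏ l, (X l : MvPolynomial (Fin n) k) ^ (u - Pi.single (M := fun _ : Fin n => ℕ) i 1) l) ∉ M)
    (hdeg : (∑ i, (v i : ℤ) • a i) = (∑ i, (u i : ℤ) • a i))
    (hv : (∏ i, (X i : MvPolynomial (Fin n) k) ^ v i) ∉ M) :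
    u ≠ v ∧ IsPrimitivePair n d a u v := by
  have huv : u ≠ v := fun h => hv (h ▸ hu)
  refine ⟨huv, huv, hdeg.symm, ?_⟩
  rintro ⟨u', v', hne, hu'u, hv'v, hu'v', hdeg'⟩
  have hv' : ∏ i, (X i : MvPolynomial (Fin n) k) ^ v' i ∉ M :=
    fun h => hv (prod_X_pow_mem_of_le hv'v h)
  have hu' : ∏ i, (X i : MvPolynomial (Fin n) k) ^ u' i ∈ M := by_contra fun h =>
    hu'v' (hAgraded.eq_of_prod_X_pow_notMem hmono hdeg' h hv')
  obtain rfl : u' = u := by_contra fun h => by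
    obtain ⟨i, hi, hle⟩ := Pi.exists_le_sub_single_of_lt (lt_of_le_of_ne hu'u h)
    exact humin i hi (prod_X_pow_mem_of_le hle hu')
  obtain rfl : v' = v := hAgraded.eq_of_prod_X_pow_notMem hmono (hdeg'.symm.trans hdeg.symm) hv' hv
  exact hne rfl
end

section
/- Let ι be a finite index set, u_i, v_i ∈ ℕ^n for i ∈ ι, and γ_i ∈ k^× units of k. If m, n ∈ ℕ^n satisfy x^m − x^n ∈ ⟨x^{u_i} − x^{v_i} : i ∈ ι⟩ in S, then there exists w : ι → ℤ such that x^m − (∏_{i∈ι} γ_i^{w_i})·x^n belongs to the ideal ⟨x^{u_i} − γ_i x^{v_i} : i ∈ ι⟩ of S. -/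
open MvPolynomial

/-! The ring map `R[σ →₀ ℕ] → R[(σ →₀ ℕ) ⧸ ≈]`, where `≈` is the additive congruence
generated by the pairs `(u i, v i)`, kills every `x^{u i} - x^{v i}`; so `x^a - x^b` in their
span forces `a ≈ b`. On the deformed side, "`x^a - g • x^b ∈ J` for some `g` in the group
generated by the `γ i`" is again an additive congruence (the telescoping identities give
symmetry, transitivity and translation invariance) and it contains the generating pairs, hence
contains `≈`. -/

namespace MvPolynomial

variable {R σ : Type*} [CommRing R]

theorem prod_univ_X_pow_eq_monomial {n : ℕ} (e : Fin n → ℕ) :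
    ∏ i, (X i : MvPolynomial (Fin n) R) ^ e i = monomial (Finsupp.equivFunOnFinite.symm e) 1 := by
  simp [monomial_eq, Finsupp.prod_fintype]

theorem addConGen_of_monomial_sub_mem_span [Nontrivial R] {ι : Type*}
    {u v : ι → σ →₀ ℕ} {a b : σ →₀ ℕ}
    (h : monomial a (1 : R) - monomial b 1 ∈
      Ideal.span {f | ∃ i, f = monomial (u i) (1 : R) - monomial (v i) 1}) :
    addConGen (fun p q => ∃ i, p = u i ∧ q = v i) a b := by
  set c := addConGen (fun p q => ∃ i, p = u i ∧ q = v i)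
  let φ : MvPolynomial σ R →+* AddMonoidAlgebra R c.Quotient :=
    AddMonoidAlgebra.mapDomainRingHom R c.mk'
  have hφ (p : σ →₀ ℕ) : φ (monomial p 1) = AddMonoidAlgebra.single (p : c.Quotient) 1 :=
    AddMonoidAlgebra.mapDomain_single
  have hker : Ideal.span {f | ∃ i, f = monomial (u i) (1 : R) - monomial (v i) 1} ≤
      RingHom.ker φ := by
    rw [Ideal.span_le]
    rintro _ ⟨i, rfl⟩
    rw [SetLike.mem_coe, RingHom.mem_ker, map_sub, hφ, hφ, sub_eq_zero,
      (AddCon.eq c).2 (AddConGen.Rel.of _ _ ⟨i, rfl, rfl⟩)]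
  have hab := hker h
  rw [RingHom.mem_ker, map_sub, hφ, hφ, sub_eq_zero] at hab
  exact (AddCon.eq c).1 ((AddMonoidAlgebra.single_left_inj one_ne_zero).1 hab)

def monomialAddCon (H : Subgroup Rˣ) (J : Ideal (MvPolynomial σ R)) : AddCon (σ →₀ ℕ) where
  r a b := ∃ g ∈ H, monomial a (1 : R) - C (g : R) * monomial b 1 ∈ J
  iseqv := by
    refine ⟨fun a => ⟨1, H.one_mem, by simp⟩, ?_, ?_⟩
    · rintro a b ⟨g, hg, hab⟩
      refine ⟨g⁻¹, H.inv_mem hg, ?_⟩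
      have hinv : C (↑g⁻¹ : R) * C (g : R) = (1 : MvPolynomial σ R) := by
        rw [← map_mul, Units.inv_mul, map_one]
      convert J.mul_mem_left (-C (↑g⁻¹ : R)) hab using 1
      linear_combination (-monomial b (1 : R)) * hinv
    · rintro a b c ⟨g, hg, hab⟩ ⟨g', hg', hbc⟩
      refine ⟨g * g', H.mul_mem hg hg', ?_⟩
      convert J.add_mem hab (J.mul_mem_left (C (g : R)) hbc) using 1
      rw [Units.val_mul, map_mul]
      ring
  add' := by
    rintro a b c d ⟨g, hg, hab⟩ ⟨g', hg', hcd⟩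
    refine ⟨g * g', H.mul_mem hg hg', ?_⟩
    convert J.add_mem (J.mul_mem_left (monomial c 1) hab)
      (J.mul_mem_left (C (g : R) * monomial b 1) hcd) using 1
    have hmul (p q : σ →₀ ℕ) : monomial (p + q) (1 : R) = monomial p 1 * monomial q 1 := by
      rw [monomial_mul, one_mul]
    rw [Units.val_mul, map_mul, hmul, hmul]
    ring

theorem exists_monomial_sub_C_mul_mem_span [Nontrivial R] {ι : Type*} [Fintype ι]
    {u v : ι → σ →₀ ℕ} (γ : ι → Rˣ) {a b : σ →₀ ℕ}
    (h : monomial a (1 : R) - monomial b 1 ∈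
      Ideal.span {f | ∃ i, f = monomial (u i) (1 : R) - monomial (v i) 1}) :
    ∃ w : ι → ℤ, monomial a (1 : R) - C ((∏ i, γ i ^ w i : Rˣ) : R) * monomial b 1 ∈
      Ideal.span {f | ∃ i, f = monomial (u i) (1 : R) - C (γ i : R) * monomial (v i) 1} := by
  have hgen : addConGen (fun p q => ∃ i, p = u i ∧ q = v i) ≤
      monomialAddCon (Subgroup.closure (Set.range γ))
        (Ideal.span {f | ∃ i, f = monomial (u i) (1 : R) - C (γ i : R) * monomial (v i) 1}) := by
    rw [AddCon.addConGen_le]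
    rintro _ _ ⟨i, rfl, rfl⟩
    exact ⟨γ i, Subgroup.subset_closure ⟨i, rfl⟩, Ideal.subset_span ⟨i, rfl⟩⟩
  obtain ⟨g, hg, hmem⟩ := hgen (addConGen_of_monomial_sub_mem_span h)
  obtain ⟨w, rfl⟩ := Subgroup.mem_closure_range_iff_of_fintype.1 hg
  exact ⟨w, hmem⟩

end MvPolynomial

/-- Telescoping-sum deformation: if `x^m − x^n` lies in the pure-difference binomial ideal
`⟨x^{u_i} − x^{v_i} : i ∈ ι⟩`, then there is `w : ι → ℤ` such that
`x^m − (∏ i, γ_i^{w_i})·x^n` lies in the deformed binomial ideal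
`⟨x^{u_i} − γ_i·x^{v_i} : i ∈ ι⟩`. -/
theorem telescoping_deformation (k : Type*) [Field k] (n : ℕ)
    (ι : Type*) [Fintype ι] (u v : ι → Fin n → ℕ) (γ : ι → kˣ)
    (m m' : Fin n → ℕ)
    (h : (∏ i, (X i : MvPolynomial (Fin n) k) ^ m i) - (∏ i, X i ^ m' i) ∈
      Ideal.span {f : MvPolynomial (Fin n) k |
        ∃ i : ι, f = (∏ l, X l ^ u i l) - ∏ l, X l ^ v i l}) :
    ∃ w : ι → ℤ,
      (∏ i, (X i : MvPolynomial (Fin n) k) ^ m i) -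
          C ((∏ i, γ i ^ w i : kˣ) : k) * (∏ i, X i ^ m' i) ∈
        Ideal.span {f : MvPolynomial (Fin n) k |
          ∃ i : ι, f = (∏ l, X l ^ u i l) - C ((γ i : k)) * ∏ l, X l ^ v i l} := by
  simp only [prod_univ_X_pow_eq_monomial] at h ⊢
  exact exists_monomial_sub_C_mul_mem_span γ h
end

section
/- Let J = J₀ ⊔ J₁ be a finite index set, with m_j, n_j ∈ ℕ^n for j ∈ J₁ and m_j ∈ ℕ^n for j ∈ J₀, and let b, b' : J₁ → ℤ^r. Suppose there exists an invertible integer matrix Φ ∈ GL(r,ℤ) with Φ·b_j = b'_j for all j ∈ J₁. For λ ∈ (k^×)^r set I(λ) := ⟨x^{m_j} − λ^{b_j}·x^{n_j} : j ∈ J₁⟩ + ⟨x^{m_j} : j ∈ J₀⟩ and I'(λ) defined the same way with b' in place of b. Then the two families of ideals coincide: {I(λ) : λ ∈ (k^×)^r} = {I'(μ) : μ ∈ (k^×)^r}. -/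
open MvPolynomial

/-- The ideal `I(λ) = ⟨x^{m_j} − λ^{b_j}·x^{n_j} : j ∈ J₁⟩ + ⟨x^{m_j} : j ∈ J₀⟩` of a
universal family, evaluated at a point `λ` of the torus `(kˣ)^r`. -/
noncomputable def famIdeal (k : Type*) [Field k] (n r : ℕ) {J₀ J₁ : Type*}
    (m₁ nn : J₁ → Fin n → ℕ) (m₀ : J₀ → Fin n → ℕ) (b : J₁ → Fin r → ℤ)
    (lam : Fin r → kˣ) : Ideal (MvPolynomial (Fin n) k) :=
  Ideal.span
    ({f : MvPolynomial (Fin n) k | ∃ j : J₁,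
        f = (∏ i, X i ^ m₁ j i) - C ((∏ l, lam l ^ b j l : kˣ) : k) * ∏ i, X i ^ nn j i} ∪
     {f : MvPolynomial (Fin n) k | ∃ j : J₀, f = ∏ i, X i ^ m₀ j i})

/-! An integer matrix `A` acts on the torus by `λ ↦ (∏ₘ λₘ ^ A m l)ₗ`, and this action
turns the character `λ ↦ λ^v` into `λ ↦ λ^(A v)`. So if `A b' = b`, every `I(λ)` is an `I'(μ)`
for `μ` the image of `λ`; apply this to `Φ` and to `Φ⁻¹`. -/

open scoped Matrix

theorem zpow_finset_sum {G ι : Type*} [CommGroup G] (a : G) (s : Finset ι) (f : ι → ℤ) :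
    a ^ (∑ i ∈ s, f i) = ∏ i ∈ s, a ^ f i :=
  map_prod (zpowersHom G a) (fun i => Multiplicative.ofAdd (f i)) s

section TorusAction

variable {G ι : Type*} [CommGroup G] [Fintype ι]

def torusSMul (A : Matrix ι ι ℤ) (lam : ι → G) : ι → G :=
  fun l => ∏ m, lam m ^ A m l

theorem prod_torusSMul_zpow (A : Matrix ι ι ℤ) (lam : ι → G) (v : ι → ℤ) :
    ∏ l, torusSMul A lam l ^ v l = ∏ m, lam m ^ (A *ᵥ v) m := by
  calc ∏ l, torusSMul A lam l ^ v l
      = ∏ l, ∏ m, lam m ^ (A m l * v l) := by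
        simp only [torusSMul, ← Finset.prod_zpow, zpow_mul]
    _ = ∏ m, ∏ l, lam m ^ (A m l * v l) := Finset.prod_comm
    _ = ∏ m, lam m ^ (A *ᵥ v) m := by
        simp only [Matrix.mulVec, dotProduct, zpow_finset_sum]

end TorusAction

section Family

variable {k : Type*} [Field k] {n r : ℕ} {J₀ J₁ : Type*}
  (m₁ nn : J₁ → Fin n → ℕ) (m₀ : J₀ → Fin n → ℕ)

theorem famIdeal_eq_of_zpow_eq {b b' : J₁ → Fin r → ℤ} {lam mu : Fin r → kˣ}
    (h : ∀ j, ∏ l, lam l ^ b j l = ∏ l, mu l ^ b' j l) :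
    famIdeal k n r m₁ nn m₀ b lam = famIdeal k n r m₁ nn m₀ b' mu := by
  simp only [famIdeal, h]

theorem range_famIdeal_subset_of_mulVec {b b' : J₁ → Fin r → ℤ} (A : Matrix (Fin r) (Fin r) ℤ)
    (hA : ∀ j, A *ᵥ b' j = b j) :
    Set.range (famIdeal k n r m₁ nn m₀ b) ⊆ Set.range (famIdeal k n r m₁ nn m₀ b') := by
  rintro _ ⟨lam, rfl⟩
  refine ⟨torusSMul A lam, famIdeal_eq_of_zpow_eq m₁ nn m₀ fun j => ?_⟩
  rw [prod_torusSMul_zpow, hA]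

end Family

theorem families_eq_of_glZ_general (k : Type*) [Field k] (n r : ℕ)
    (J₀ J₁ : Type*)
    (m₁ nn : J₁ → Fin n → ℕ) (m₀ : J₀ → Fin n → ℕ) (b b' : J₁ → Fin r → ℤ)
    (Φ : Matrix (Fin r) (Fin r) ℤ) (hΦ : IsUnit Φ.det)
    (hb : ∀ j : J₁, Φ.mulVec (b j) = b' j) :
    (Set.range fun lam : Fin r → kˣ => famIdeal k n r m₁ nn m₀ b lam) =
      (Set.range fun lam : Fin r → kˣ => famIdeal k n r m₁ nn m₀ b' lam) := by
  have hb_inv : ∀ j, Φ⁻¹ *ᵥ b' j = b j := fun j => by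
    rw [← hb j, Matrix.mulVec_mulVec, Matrix.nonsing_inv_mul Φ hΦ, Matrix.one_mulVec]
  exact (range_famIdeal_subset_of_mulVec m₁ nn m₀ Φ⁻¹ hb_inv).antisymm
    (range_famIdeal_subset_of_mulVec m₁ nn m₀ Φ hb)

/-- If `Φ ∈ GL(r,ℤ)` satisfies `Φ·b_j = b'_j` for all `j ∈ J₁`, then the family of ideals
`I(λ)` built from the exponents `b` coincides with the family `I'(μ)` built from `b'`. -/
theorem families_eq_of_glZ (k : Type*) [Field k] (n r : ℕ)
    (J₀ J₁ : Type*) [Fintype J₀] [Fintype J₁]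
    (m₁ nn : J₁ → Fin n → ℕ) (m₀ : J₀ → Fin n → ℕ) (b b' : J₁ → Fin r → ℤ)
    (Φ : Matrix (Fin r) (Fin r) ℤ) (hΦ : IsUnit Φ.det)
    (hb : ∀ j : J₁, Φ.mulVec (b j) = b' j) :
    (Set.range fun lam : Fin r → kˣ => famIdeal k n r m₁ nn m₀ b lam) =
      (Set.range fun lam : Fin r → kˣ => famIdeal k n r m₁ nn m₀ b' lam) :=
  families_eq_of_glZ_general k n r J₀ J₁ m₁ nn m₀ b b' Φ hΦ hb
end

section
/- Assume ker A ∩ ℕ^n = {0}. Let J₁ and J₀ be finite index sets, with m_j, n_j ∈ ℕ^n satisfying A m_j = A n_j and b_j ∈ ℤ^r for j ∈ J₁, and m_j ∈ ℕ^n for j ∈ J₀. Then there exists w ∈ ℤ^n with w_i > 0 for all i, lying in the row span of A (w = Aᵀv for some v ∈ ℤ^d), such that with respect to the grading on k[x_1,…,x_n,y_1,…,y_r,z_1,…,z_r] assigning x_i weight w_i and every y_l and z_l weight 1, each binomial z^{b_j^+}·y^{b_j^−}·x^{m_j} − z^{b_j^−}·y^{b_j^+}·x^{n_j} (j ∈ J₁)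 and each monomial x^{m_j} (j ∈ J₀) is homogeneous. In particular the generalised universal family is homogeneous with respect to a strictly positive grading. -/
/-!
Gordan's alternative: for a matrix `A` over an ordered field, either `A v` is entrywise positive
for some `v`, or `yᵀ A = 0` for some nonzero `y ≥ 0`. Fourier–Motzkin elimination of the last
coordinate reduces it to one dimension less, and over `ℤ` it follows by clearing denominators.
Applied to `Aᵀ`, whose rows are the `a_i`, the hypothesis `ker A ∩ ℕ^n = {0}` excludes the second
case, so `w := Aᵀ v` is a positive integer weight in the row span of `A`. Every monomial is then
homogeneous, and the two terms of each binomial have equal degree: their `y,z`-parts both have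
degree `∑ |b_l|`, and `⟨m_j, w⟩ = ⟨A m_j, v⟩ = ⟨A n_j, v⟩ = ⟨n_j, w⟩`.
-/

open Matrix MvPolynomial

namespace FourierMotzkin

variable {ι : Type*}

section Ring

variable {R : Type*} [CommRing R] [LinearOrder R] (α : ι → R)

abbrev Index := {i // α i = 0} ⊕ {i // 0 < α i} × {i // α i < 0}

variable [DecidableEq ι]

/-- Left multiplication by `elimMatrix α` turns a matrix with rows `a_i` and last column `α` into
the Fourier–Motzkin eliminated system: the rows `a_z` with `α z = 0` and the rows
`α p • a_q - α q • a_p` with `α p > 0 > α q`, all of which vanish in the last column. -/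
def elimMatrix : Matrix (Index α) ι R :=
  Matrix.of <| Sum.elim (fun z => Pi.single z.1 1)
    (fun pq => α pq.1 • Pi.single pq.2.1 1 - α pq.2.1 • Pi.single pq.1.1 1)

variable {α}

section mulVec

variable [Fintype ι]

@[simp] lemma elimMatrix_mulVec_inl (S : ι → R) (z : {i // α i = 0}) :
    (elimMatrix α *ᵥ S) (.inl z) = S z := by
  simp [elimMatrix, mulVec]

@[simp] lemma elimMatrix_mulVec_inr (S : ι → R) (p : {i // 0 < α i}) (q : {i // α i < 0}) :
    (elimMatrix α *ᵥ S) (.inr (p, q)) = α p * S q - α q * S p := by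
  change (α p • Pi.single q.1 1 - α q • Pi.single p.1 1) ⬝ᵥ S = _
  simp [sub_dotProduct]

lemma elimMatrix_mulVec_self : elimMatrix α *ᵥ α = 0 := by
  ext (⟨z, hz⟩ | ⟨p, q⟩)
  · simpa using hz
  · simp [mul_comm]

end mulVec

variable [IsStrictOrderedRing R]

lemma elimMatrix_nonneg (x : Index α) (i : ι) : 0 ≤ elimMatrix α x i := by
  rcases x with ⟨z, -⟩ | ⟨⟨p, hp⟩, ⟨q, hq⟩⟩
  · simp only [elimMatrix, of_apply, Sum.elim_inl, Pi.single_apply]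
    split_ifs <;> simp
  · have hpq : p ≠ q := fun h => (hp.trans (h ▸ hq)).false
    simp only [elimMatrix, of_apply, Sum.elim_inr, Pi.sub_apply, Pi.smul_apply, smul_eq_mul]
    rcases eq_or_ne i q with rfl | hiq
    · simp [hpq, hp.le]
    · rcases eq_or_ne i p with rfl | hip
      · simp [hiq, hq.le]
      · simp [hiq, hip]

lemma exists_elimMatrix_pos (x : Index α) : ∃ i, 0 < elimMatrix α x i := by
  rcases x with ⟨z, -⟩ | ⟨⟨p, hp⟩, ⟨q, hq⟩⟩
  · exact ⟨z, by simp [elimMatrix]⟩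
  · have hpq : p ≠ q := fun h => (hp.trans (h ▸ hq)).false
    exact ⟨q, by simp [elimMatrix, hpq, hp]⟩

end Ring

/-- `t` must exceed `-S i / α i` where `α i > 0` and stay below it where `α i < 0`; the
hypothesis at `.inr (p, q)` says exactly that these bounds are compatible. -/
lemma exists_forall_pos_add_mul [DecidableEq ι] [Fintype ι] {F : Type*} [Field F]
    [LinearOrder F] [IsStrictOrderedRing F] {α S : ι → F} (hS : ∀ x, 0 < (elimMatrix α *ᵥ S) x) :
    ∃ t, ∀ i, 0 < S i + t * α i := by
  obtain ⟨t, hpos, hneg⟩ := Finset.exists_between'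
    ((Finset.univ.filter (0 < α ·)).image fun i => -S i / α i)
    ((Finset.univ.filter (α · < 0)).image fun i => -S i / α i) (by
      simp only [Finset.mem_image, Finset.mem_filter, Finset.mem_univ, true_and]
      rintro _ ⟨p, hp, rfl⟩ _ ⟨q, hq, rfl⟩
      have := hS (.inr (⟨p, hp⟩, ⟨q, hq⟩))
      rw [elimMatrix_mulVec_inr] at this
      rw [lt_div_iff_of_neg hq, div_mul_eq_mul_div, lt_div_iff₀ hp]
      linarith)
  refine ⟨t, fun i => ?_⟩
  rcases lt_trichotomy (α i) 0 with hi | hi | hi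
  · have := hneg _ (Finset.mem_image_of_mem _ (by simpa using hi))
    rw [lt_div_iff_of_neg hi] at this
    linarith
  · simpa [hi] using hS (.inl ⟨i, hi⟩)
  · have := hpos _ (Finset.mem_image_of_mem _ (by simpa using hi))
    rw [div_lt_iff₀ hi] at this
    linarith

end FourierMotzkin

namespace Matrix

variable {ι κ R : Type*} [Fintype ι] [Semiring R] [PartialOrder R]

lemma vecMul_nonneg [IsOrderedRing R] {B : Matrix ι κ R} (hB : ∀ x i, 0 ≤ B x i) {y : ι → R}
    (hy : 0 ≤ y) : 0 ≤ y ᵥ* B :=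
  fun i => Finset.sum_nonneg fun x _ => mul_nonneg (hy x) (hB x i)

lemma vecMul_ne_zero [IsStrictOrderedRing R] {B : Matrix ι κ R} (hB : ∀ x i, 0 ≤ B x i)
    (hB' : ∀ x, ∃ i, 0 < B x i) {y : ι → R} (hy : 0 ≤ y) (hy' : y ≠ 0) : y ᵥ* B ≠ 0 := by
  obtain ⟨x, hx⟩ := Function.ne_iff.1 hy'
  obtain ⟨i, hi⟩ := hB' x
  exact Function.ne_iff.2 ⟨i, (Finset.sum_pos' (fun x _ => mul_nonneg (hy x) (hB x i))
    ⟨x, Finset.mem_univ x, mul_pos ((hy x).lt_of_ne' hx) hi⟩).ne'⟩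

end Matrix

lemma Matrix.mulVec_snoc {ι R : Type*} [CommSemiring R] {d : ℕ} (A : Matrix ι (Fin (d + 1)) R)
    (u : Fin d → R) (t : R) (i : ι) :
    (A *ᵥ Fin.snoc u t) i = (A.submatrix id Fin.castSucc *ᵥ u) i + t * A i (Fin.last d) := by
  simp [mulVec, dotProduct, Fin.sum_univ_castSucc, mul_comm]

open FourierMotzkin in
theorem gordan_alternative {ι F : Type*} [Fintype ι] [Field F] [LinearOrder F]
    [IsStrictOrderedRing F] {d : ℕ} (A : Matrix ι (Fin d) F) :
    (∃ v, ∀ i, 0 < (A *ᵥ v) i) ∨ ∃ y, 0 ≤ y ∧ y ≠ 0 ∧ y ᵥ* A = 0 := by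
  classical
  induction d generalizing ι with
  | zero =>
    cases isEmpty_or_nonempty ι with
    | inl => exact .inl ⟨0, isEmptyElim⟩
    | inr => exact .inr ⟨1, zero_le_one, one_ne_zero, Subsingleton.elim _ _⟩
  | succ d ih =>
    set α : ι → F := fun i => A i (Fin.last d)
    set A₀ := A.submatrix id Fin.castSucc
    rcases ih (elimMatrix α * A₀) with ⟨u, hu⟩ | ⟨y, hy0, hy, hyA⟩
    · obtain ⟨t, ht⟩ := exists_forall_pos_add_mul (S := A₀ *ᵥ u) fun x => by
        simpa only [mulVec_mulVec] using hu x
      exact .inl ⟨Fin.snoc u t, fun i => by rw [mulVec_snoc]; exact ht i⟩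
    · refine .inr ⟨y ᵥ* elimMatrix α, vecMul_nonneg elimMatrix_nonneg hy0,
        vecMul_ne_zero elimMatrix_nonneg exists_elimMatrix_pos hy0 hy, funext fun j => ?_⟩
      refine Fin.lastCases ?_ (fun j => ?_) j
      · change y ᵥ* elimMatrix α ⬝ᵥ α = 0
        rw [← dotProduct_mulVec, elimMatrix_mulVec_self, dotProduct_zero]
      · change (y ᵥ* elimMatrix α ᵥ* A₀) j = 0
        rw [vecMul_vecMul, hyA, Pi.zero_apply]

lemma exists_pos_nat_smul_eq_intCast {ι : Type*} [Fintype ι] (v : ι → ℚ) :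
    ∃ N : ℕ, 0 < N ∧ ∃ V : ι → ℤ, Int.cast ∘ V = (N : ℚ) • v := by
  refine ⟨∏ i, (v i).den, Finset.prod_pos fun i _ => (v i).pos, ?_⟩
  choose k hk using fun i => Finset.dvd_prod_of_mem (fun i => (v i).den) (Finset.mem_univ i)
  refine ⟨fun i => k i * (v i).num, funext fun i => ?_⟩
  simp only [Function.comp_apply, Pi.smul_apply, smul_eq_mul, hk i]
  push_cast
  rw [← Rat.mul_den_eq_num]
  ring

theorem exists_forall_pos_mulVec_int {ι : Type*} [Fintype ι] {d : ℕ} (A : Matrix ι (Fin d) ℤ)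
    (hA : ∀ u : ι → ℤ, 0 ≤ u → u ᵥ* A = 0 → u = 0) : ∃ v, ∀ i, 0 < (A *ᵥ v) i := by
  rcases gordan_alternative (A.map (Int.castRingHom ℚ)) with ⟨v, hv⟩ | ⟨y, hy0, hy, hyA⟩
  · obtain ⟨N, hN, V, hV⟩ := exists_pos_nat_smul_eq_intCast v
    refine ⟨V, fun i => ?_⟩
    have hcast : ((A *ᵥ V) i : ℚ) = N * (A.map (Int.castRingHom ℚ) *ᵥ v) i := by
      rw [← eq_intCast (Int.castRingHom ℚ), RingHom.map_mulVec, Int.coe_castRingHom, hV,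
        mulVec_smul]
      rfl
    exact_mod_cast hcast ▸ mul_pos (Nat.cast_pos.2 hN) (hv i)
  · obtain ⟨N, hN, L, hL⟩ := exists_pos_nat_smul_eq_intCast y
    have hL0 : 0 ≤ L := fun i => by
      have : (0 : ℚ) ≤ L i := by
        rw [← Function.comp_apply (f := Int.cast), hL]
        exact mul_nonneg (Nat.cast_nonneg N) (hy0 i)
      exact_mod_cast this
    have hLA : L ᵥ* A = 0 := funext fun j => by
      have hcast : ((L ᵥ* A) j : ℚ) = N * (y ᵥ* A.map (Int.castRingHom ℚ)) j := by
        rw [← eq_intCast (Int.castRingHom ℚ), RingHom.map_vecMul, Int.coe_castRingHom, hL,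
          smul_vecMul]
        rfl
      rw [hyA, Pi.zero_apply, mul_zero] at hcast
      exact_mod_cast hcast
    refine absurd (funext fun i => ?_) hy
    simpa [hA L hL0 hLA, hN.ne', eq_comm] using congrFun hL i

lemma isWeightedHomogeneous_prod_X_pow {R σ τ M : Type*} [CommSemiring R] [AddCommMonoid M]
    [Fintype τ] (w : σ → M) (f : τ → σ) (e : τ → ℕ) :
    IsWeightedHomogeneous w (∏ l, (X (f l) : MvPolynomial σ R) ^ e l) (∑ l, e l • w (f l)) :=
  .prod _ _ _ fun l _ => (isWeightedHomogeneous_X R w (f l)).pow (e l)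

/-- The variables of `k[x, y, z]` are indexed by `Fin n ⊕ (Fin r ⊕ Fin r)`, where `Sum.inl i`
is `x_i`, `Sum.inr (Sum.inl l)` is `y_l`, and `Sum.inr (Sum.inr l)` is `z_l`; for `b ∈ ℤ^r`
the componentwise nonnegative parts are `b^+ = l ↦ (b l).toNat` and
`b^− = l ↦ (−(b l)).toNat`. -/
theorem generalised_universal_family_homogeneous_general (k : Type*) [Field k] (n d r : ℕ)
    (a : Fin n → Fin d → ℤ)
    (hker : ∀ u : Fin n → ℤ, (∀ i, 0 ≤ u i) → (∑ i, u i • a i) = 0 → u = 0)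
    (J₀ J₁ : Type*)
    (m₁ nn : J₁ → Fin n → ℕ) (m₀ : J₀ → Fin n → ℕ) (b : J₁ → Fin r → ℤ)
    (hdeg : ∀ j : J₁, (∑ i, (m₁ j i : ℤ) • a i) = ∑ i, (nn j i : ℤ) • a i) :
    ∃ w : Fin n → ℤ,
      (∀ i, 0 < w i) ∧
      (∃ v : Fin d → ℤ, ∀ i, w i = ∑ jj, v jj * a i jj) ∧
      (∀ j : J₁, ∃ deg : ℤ,
        IsWeightedHomogeneous (Sum.elim w fun _ : Fin r ⊕ Fin r => (1 : ℤ))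
          ((∏ l, X (Sum.inr (Sum.inr l)) ^ (b j l).toNat) *
              (∏ l, X (Sum.inr (Sum.inl l)) ^ (-(b j l)).toNat) *
              (∏ i, (X (Sum.inl i) : MvPolynomial (Fin n ⊕ (Fin r ⊕ Fin r)) k) ^ m₁ j i) -
            (∏ l, X (Sum.inr (Sum.inr l)) ^ (-(b j l)).toNat) *
              (∏ l, X (Sum.inr (Sum.inl l)) ^ (b j l).toNat) *
              (∏ i, (X (Sum.inl i) : MvPolynomial (Fin n ⊕ (Fin r ⊕ Fin r)) k) ^ nn j i))
          deg) ∧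
      (∀ j : J₀, ∃ deg : ℤ,
        IsWeightedHomogeneous (Sum.elim w fun _ : Fin r ⊕ Fin r => (1 : ℤ))
          (∏ i, (X (Sum.inl i) : MvPolynomial (Fin n ⊕ (Fin r ⊕ Fin r)) k) ^ m₀ j i)
          deg) := by
  obtain ⟨v, hv⟩ := exists_forall_pos_mulVec_int (Matrix.of a) fun u hu h =>
    hker u hu (by rwa [vecMul_eq_sum] at h)
  set w := Matrix.of a *ᵥ v
  have hw : ∀ c c' : Fin n → ℕ, ∑ i, (c i : ℤ) • a i = ∑ i, (c' i : ℤ) • a i →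
      ∑ i, c i • w i = ∑ i, c' i • w i := by
    intro c c' h
    simp only [nsmul_eq_mul]
    change (Nat.cast ∘ c) ⬝ᵥ w = (Nat.cast ∘ c') ⬝ᵥ w
    rw [dotProduct_mulVec, dotProduct_mulVec, vecMul_eq_sum, vecMul_eq_sum]
    exact congrArg (· ⬝ᵥ v) h
  refine ⟨w, hv, ⟨v, fun i => ?_⟩, fun j => ?_,
    fun j => ⟨_, isWeightedHomogeneous_prod_X_pow _ Sum.inl (m₀ j)⟩⟩
  · simp [w, mulVec, dotProduct, mul_comm]
  · refine ⟨_, (((isWeightedHomogeneous_prod_X_pow _ _ _).mul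
      (isWeightedHomogeneous_prod_X_pow _ _ _)).mul (isWeightedHomogeneous_prod_X_pow _ _ _)).sub ?_⟩
    convert ((isWeightedHomogeneous_prod_X_pow _ _ _).mul
      (isWeightedHomogeneous_prod_X_pow _ _ _)).mul (isWeightedHomogeneous_prod_X_pow _ _ _) using 1
    simp only [Sum.elim_inl, Sum.elim_inr, hw (m₁ j) (nn j) (hdeg j)]
    ring

/-- Assume `ker A ∩ ℕ^n = {0}`. Then there is a strictly positive integer vector `w` in the
row span of `A` such that, with respect to the grading on `k[x, y, z]` assigning `x_i` the
weight `w_i` and every `y_l` and `z_l` the weight `1`, each binomial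
`z^{b_j^+}·y^{b_j^−}·x^{m_j} − z^{b_j^−}·y^{b_j^+}·x^{n_j}` (`j ∈ J₁`, where `A m_j = A n_j`)
and each monomial `x^{m_j}` (`j ∈ J₀`) is homogeneous. In particular the generalised
universal family is homogeneous with respect to a strictly positive grading.

The variables of `k[x, y, z]` are indexed by `Fin n ⊕ (Fin r ⊕ Fin r)`, where `Sum.inl i`
is `x_i`, `Sum.inr (Sum.inl l)` is `y_l`, and `Sum.inr (Sum.inr l)` is `z_l`; for `b ∈ ℤ^r`
the componentwise nonnegative parts are `b^+ = l ↦ (b l).toNat` and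
`b^− = l ↦ (−(b l)).toNat`. -/
theorem generalised_universal_family_homogeneous (k : Type*) [Field k] (n d r : ℕ)
    (a : Fin n → Fin d → ℤ)
    (hker : ∀ u : Fin n → ℤ, (∀ i, 0 ≤ u i) → (∑ i, u i • a i) = 0 → u = 0)
    (J₀ J₁ : Type*) [Fintype J₀] [Fintype J₁]
    (m₁ nn : J₁ → Fin n → ℕ) (m₀ : J₀ → Fin n → ℕ) (b : J₁ → Fin r → ℤ)
    (hdeg : ∀ j : J₁, (∑ i, (m₁ j i : ℤ) • a i) = ∑ i, (nn j i : ℤ) • a i) :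
    ∃ w : Fin n → ℤ,
      (∀ i, 0 < w i) ∧
      (∃ v : Fin d → ℤ, ∀ i, w i = ∑ jj, v jj * a i jj) ∧
      (∀ j : J₁, ∃ deg : ℤ,
        IsWeightedHomogeneous (Sum.elim w fun _ : Fin r ⊕ Fin r => (1 : ℤ))
          ((∏ l, X (Sum.inr (Sum.inr l)) ^ (b j l).toNat) *
              (∏ l, X (Sum.inr (Sum.inl l)) ^ (-(b j l)).toNat) *
              (∏ i, (X (Sum.inl i) : MvPolynomial (Fin n ⊕ (Fin r ⊕ Fin r)) k) ^ m₁ j i) -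
            (∏ l, X (Sum.inr (Sum.inr l)) ^ (-(b j l)).toNat) *
              (∏ l, X (Sum.inr (Sum.inl l)) ^ (b j l).toNat) *
              (∏ i, (X (Sum.inl i) : MvPolynomial (Fin n ⊕ (Fin r ⊕ Fin r)) k) ^ nn j i))
          deg) ∧
      (∀ j : J₀, ∃ deg : ℤ,
        IsWeightedHomogeneous (Sum.elim w fun _ : Fin r ⊕ Fin r => (1 : ℤ))
          (∏ i, (X (Sum.inl i) : MvPolynomial (Fin n ⊕ (Fin r ⊕ Fin r)) k) ^ m₀ j i)
          deg) :=
  generalised_universal_family_homogeneous_general k n d r a hker J₀ J₁ m₁ nn m₀ b hdeg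
end

section
/- Let J = J₀ ⊔ J₁ be a finite index set, with m_j, n_j ∈ ℕ^n for j ∈ J₁ and m_j ∈ ℕ^n for j ∈ J₀, let b : J₁ → ℤ^r, and let λ ∈ (k^×)^r. Set I := ⟨x^{m_j} − x^{n_j} : j ∈ J₁⟩ + ⟨x^{m_j} : j ∈ J₀⟩ and I_λ := ⟨x^{m_j} − λ^{b_j}·x^{n_j} : j ∈ J₁⟩ + ⟨x^{m_j} : j ∈ J₀⟩. If I = I_λ and x^{n_j} ∉ I for every j ∈ J₁, then λ^{b_j} = 1 for every j ∈ J₁; in particular I_λ coincides with the family evaluated at the identity point (1,…,1). -/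
/-! The generators of `I` and `I_λ` indexed by `j` differ by `(λ^{b_j} - 1) • x^{n_j}`, so
`I = I_λ` puts this multiple of `x^{n_j}` into `I`; as `x^{n_j} ∉ I` and `k` is a field, the
scalar vanishes. -/

open MvPolynomial

theorem Submodule.eq_of_sub_smul_mem_of_sub_smul_mem {K M : Type*} [DivisionRing K]
    [AddCommGroup M] [Module K M] {p : Submodule K M} {a x : M} {c d : K}
    (hc : a - c • x ∈ p) (hd : a - d • x ∈ p) (hx : x ∉ p) : c = d := by
  have hdiff : (d - c) • x ∈ p := by
    simpa only [sub_smul, sub_sub_sub_cancel_left] using p.sub_mem hc hd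
  by_contra hcd
  exact hx ((p.smul_mem_iff (sub_ne_zero.mpr (Ne.symm hcd))).mp hdiff)

theorem binomial_mem_famIdeal (k : Type*) [Field k] (n r : ℕ) {J₀ J₁ : Type*}
    (m₁ nn : J₁ → Fin n → ℕ) (m₀ : J₀ → Fin n → ℕ) (b : J₁ → Fin r → ℤ)
    (lam : Fin r → kˣ) (j : J₁) :
    (∏ i, X i ^ m₁ j i) - ((∏ l, lam l ^ b j l : kˣ) : k) • ∏ i, X i ^ nn j i ∈
      famIdeal k n r m₁ nn m₀ b lam := by
  rw [← C_mul']
  exact Ideal.subset_span (Or.inl ⟨j, rfl⟩)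

theorem lambda_pow_eq_one_of_famIdeal_eq_general (k : Type*) [Field k] (n r : ℕ)
    (J₀ J₁ : Type*)
    (m₁ nn : J₁ → Fin n → ℕ) (m₀ : J₀ → Fin n → ℕ) (b : J₁ → Fin r → ℤ)
    (lam : Fin r → kˣ)
    (hEq : famIdeal k n r m₁ nn m₀ b (fun _ => 1) = famIdeal k n r m₁ nn m₀ b lam)
    (hstd : ∀ j : J₁,
      (∏ i, (X i : MvPolynomial (Fin n) k) ^ nn j i) ∉
        famIdeal k n r m₁ nn m₀ b (fun _ => 1)) :
    (∀ j : J₁, (∏ l, lam l ^ b j l) = 1) ∧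
      famIdeal k n r m₁ nn m₀ b lam = famIdeal k n r m₁ nn m₀ b (fun _ => 1) := by
  refine ⟨fun j => Units.ext ?_, hEq.symm⟩
  have hone := binomial_mem_famIdeal k n r m₁ nn m₀ b (fun _ => 1) j
  have hlam := binomial_mem_famIdeal k n r m₁ nn m₀ b lam j
  rw [← hEq] at hlam
  simp only [one_zpow, Finset.prod_const_one, Units.val_one] at hone
  exact Submodule.eq_of_sub_smul_mem_of_sub_smul_mem
    (p := (famIdeal k n r m₁ nn m₀ b fun _ => 1).restrictScalars k) hlam hone (hstd j)

/-- Set `I := ⟨x^{m_j} − x^{n_j} : j ∈ J₁⟩ + ⟨x^{m_j} : j ∈ J₀⟩` (the family at the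
identity point) and `I_λ := ⟨x^{m_j} − λ^{b_j}·x^{n_j} : j ∈ J₁⟩ + ⟨x^{m_j} : j ∈ J₀⟩`.
If `I = I_λ` and `x^{n_j} ∉ I` for every `j ∈ J₁`, then `λ^{b_j} = 1` for every `j ∈ J₁`;
in particular `I_λ` coincides with the family evaluated at the identity point `(1,…,1)`. -/
theorem lambda_pow_eq_one_of_famIdeal_eq (k : Type*) [Field k] (n r : ℕ)
    (J₀ J₁ : Type*) [Fintype J₀] [Fintype J₁]
    (m₁ nn : J₁ → Fin n → ℕ) (m₀ : J₀ → Fin n → ℕ) (b : J₁ → Fin r → ℤ)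
    (lam : Fin r → kˣ)
    (hEq : famIdeal k n r m₁ nn m₀ b (fun _ => 1) = famIdeal k n r m₁ nn m₀ b lam)
    (hstd : ∀ j : J₁,
      (∏ i, (X i : MvPolynomial (Fin n) k) ^ nn j i) ∉
        famIdeal k n r m₁ nn m₀ b (fun _ => 1)) :
    (∀ j : J₁, (∏ l, lam l ^ b j l) = 1) ∧
      famIdeal k n r m₁ nn m₀ b lam = famIdeal k n r m₁ nn m₀ b (fun _ => 1) :=
  lambda_pow_eq_one_of_famIdeal_eq_general k n r J₀ J₁ m₁ nn m₀ b lam hEq hstd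
end
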